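/- arXiv:1106.5029 — 2 statements merged into one kernel-verified Lean document; each statement's English description precedes it below -/
import Mathlib

section
/- Let b_n be a given sequence in a commutative ring and define a_n uniquely by a_0 = 0 and the recursion ∑_{k=1}^n a_k q^{n-k} binom_q(n-1, k-1) = 1/[n]_q for all n ≥ 1. Then for all n ≥ 0, ∑_{k=1}^n binom_q(n,k) a_k = H^1_{n,q} = ∑_{k=1}^n 1/[k]_q. -/
/-- The Gaussian (q-)binomial coefficient. -/
def qbinom (q : ℝ) : ℕ → ℕ → ℝ
  | _, 0 => 1
  | 0, _ + 1 => 0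
  | n + 1, k + 1 => q ^ (k + 1) * qbinom q n (k + 1) + qbinom q n k

/-- The q-integer `[n]_q = (1 - q^n)/(1 - q)`. -/
noncomputable def qint (q : ℝ) (n : ℕ) : ℝ := (1 - q ^ n) / (1 - q)

lemma qbinom_zero_of_lt (q : ℝ) : ∀ n k, n < k → qbinom q n k = 0 := by
  intro n
  induction n with
  | zero =>
    intro k hk
    cases k with
    | zero => omega
    | succ k => simp [qbinom]
  | succ n ih =>
    intro k hk
    cases k with
    | zero => omega
    | succ k =>
      rw [qbinom, ih k (by omega), ih (k+1) (by omega)]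
      ring

lemma qbinom_k0 (q : ℝ) : ∀ n, qbinom q n 0 = 1 := by
  intro n; cases n <;> rfl

lemma qbinom_self (q : ℝ) : ∀ n, qbinom q n n = 1 := by
  intro n
  induction n with
  | zero => rfl
  | succ n ih =>
    rw [qbinom, ih, qbinom_zero_of_lt q n (n+1) (by omega)]
    ring

lemma qbinom_pascal2 (q : ℝ) : ∀ n k, qbinom q (n+1) (k+1) =
    q ^ (n - k) * qbinom q n k + qbinom q n (k+1) := by
  intro n
  induction n with
  | zero =>
    intro k
    cases k with
    | zero => simp [qbinom]
    | succ k => simp [qbinom]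
  | succ n ih =>
    intro k
    cases k with
    | zero =>
      have h0 := ih 0
      have e0 : qbinom q (n+1+1) (0+1)
          = q ^ (0+1) * qbinom q (n+1) (0+1) + qbinom q (n+1) 0 := rfl
      have e1 : qbinom q (n+1) (0+1)
          = q ^ (0+1) * qbinom q n (0+1) + qbinom q n 0 := rfl
      simp only [Nat.sub_zero] at h0 ⊢
      rw [qbinom_k0] at h0 e0 e1 ⊢
      linear_combination e0 + q * h0 - e1
    | succ j =>
      rcases lt_trichotomy j n with hj | hj | hj
      · have h1 := ih (j+1)
        have h2 := ih j
        have e0 : qbinom q (n+1+1) (j+1+1)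
            = q ^ (j+1+1) * qbinom q (n+1) (j+1+1) + qbinom q (n+1) (j+1) := rfl
        have e4 : qbinom q (n+1) (j+1)
            = q ^ (j+1) * qbinom q n (j+1) + qbinom q n j := rfl
        have e3 : qbinom q (n+1) (j+1+1)
            = q ^ (j+1+1) * qbinom q n (j+1+1) + qbinom q n (j+1) := rfl
        have hsub : n + 1 - (j + 1) = n - j := by omega
        have hp : q ^ (n - j) = q ^ (n - (j+1)) * q := by
          rw [← pow_succ]; congr 1; omega
        rw [hsub, hp]
        rw [hp] at h2
        linear_combination e0 + q ^ (j+1+1) * h1 + h2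
          - (q ^ (n - (j+1)) * q) * e4 - e3
      · subst hj
        rw [qbinom_self, qbinom_self, qbinom_zero_of_lt q (j+1) (j+2) (by omega)]
        simp
      · rw [qbinom_zero_of_lt q (n+1+1) (j+1+1) (by omega),
            qbinom_zero_of_lt q (n+1) (j+1) (by omega),
            qbinom_zero_of_lt q (n+1) (j+1+1) (by omega)]
        ring

theorem qHarmonic_binom_expansion (q : ℝ) (hq : 0 < q) (hq1 : q < 1)
    (a : ℕ → ℝ) (ha0 : a 0 = 0)
    (ha : ∀ n : ℕ, 1 ≤ n →
      ∑ k ∈ Finset.Icc 1 n, a k * q ^ (n - k) * qbinom q (n - 1) (k - 1) = 1 / qint q n) :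
    ∀ n : ℕ, ∑ k ∈ Finset.Icc 1 n, qbinom q n k * a k = ∑ k ∈ Finset.Icc 1 n, 1 / qint q k := by
  intro n
  induction n with
  | zero => simp
  | succ n ih =>
    have key := ha (n+1) (by omega)
    simp only [Nat.add_sub_cancel] at key
    have hsplit : ∀ k ∈ Finset.Icc 1 (n+1), qbinom q (n+1) k * a k
        = a k * q ^ ((n+1) - k) * qbinom q n (k-1) + qbinom q n k * a k := by
      intro k hk
      simp only [Finset.mem_Icc] at hk
      obtain ⟨j, rfl⟩ : ∃ j, k = j + 1 := ⟨k - 1, by omega⟩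
      rw [qbinom_pascal2]
      simp only [Nat.succ_sub_succ, Nat.add_sub_cancel, Nat.sub_zero]
      ring
    rw [Finset.sum_congr rfl hsplit, Finset.sum_add_distrib, key]
    have h2 : ∑ k ∈ Finset.Icc 1 (n+1), qbinom q n k * a k
        = ∑ k ∈ Finset.Icc 1 n, qbinom q n k * a k := by
      rw [Finset.sum_Icc_succ_top (by omega : 1 ≤ n + 1),
          qbinom_zero_of_lt q n (n+1) (by omega)]
      ring
    rw [h2, ih, Finset.sum_Icc_succ_top (by omega : 1 ≤ n + 1)]
    ring
end

section
/- q-binomial theorem: for 0 < q < 1 and complex a, z with |z| < 1, (az;q)_∞ / (z;q)_∞ = ∑_{k≥0} (a;q)_k z^k / (q;q)_k, where (x;q)_∞ = ∏_{i≥0} (1 - x q^i) and (x;q)_k = ∏_{i=0}^{k-1}(1-x q^i). -/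
open Finset Filter Topology

/-- pointwise: for `0 ≤ x ≤ r < 1`, `exp(-(x/(1-r))) ≤ 1 - x`. -/
lemma qbt_one_sub_ge {x r : ℝ} (hx : 0 ≤ x) (hxr : x ≤ r) (hr : r < 1) :
    Real.exp (-(x / (1 - r))) ≤ 1 - x := by
  have hr0 : 0 < 1 - r := by linarith
  have h1 : 1 + x / (1 - r) ≤ Real.exp (x / (1 - r)) := by
    have := Real.add_one_le_exp (x / (1 - r)); linarith
  have hpos : 0 < 1 + x / (1 - r) := by positivity
  rw [Real.exp_neg]
  rw [inv_le_comm₀ (Real.exp_pos _) (by nlinarith)]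
  calc (1 - x)⁻¹ ≤ 1 + x / (1 - r) := by
        rw [inv_le_iff_one_le_mul₀ (by nlinarith)]
        have : (1 + x / (1-r)) * (1 - x) - 1 = x * (r - x) / (1 - r) := by
          field_simp; ring
        nlinarith [mul_nonneg (mul_nonneg hx (by linarith : (0:ℝ) ≤ r - x)) (le_of_lt (inv_pos.mpr hr0)), div_nonneg (mul_nonneg hx (by linarith : (0:ℝ) ≤ r - x)) hr0.le]
    _ ≤ Real.exp (x / (1 - r)) := h1

lemma qbt_geom_sum_le {q : ℝ} (hq0 : 0 < q) (hq1 : q < 1) (n : ℕ) :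
    ∑ i ∈ Finset.range n, q ^ i ≤ 1 / (1 - q) := by
  rw [geom_sum_eq (by intro h; linarith [h ▸ hq1] : q ≠ 1)]
  have h : (q ^ n - 1) / (q - 1) = (1 - q ^ n) / (1 - q) := by
    rw [div_eq_div_iff (by linarith) (by linarith)]; ring
  rw [h, div_le_div_iff₀ (by linarith) (by linarith)]
  have : (0:ℝ) ≤ q ^ n := by positivity
  nlinarith

/-- Lower bound for partial products `∏ (1 - r q^i)`. -/
lemma qbt_prod_lower {r q : ℝ} (hr0 : 0 ≤ r) (hr1 : r < 1) (hq0 : 0 < q) (hq1 : q < 1)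
    (n : ℕ) :
    Real.exp (-(r / ((1 - r) * (1 - q)))) ≤ ∏ i ∈ Finset.range n, (1 - r * q ^ i) := by
  have hq0' : (0:ℝ) ≤ q := hq0.le
  have hpow1 : ∀ i : ℕ, q ^ i ≤ 1 := fun i => pow_le_one₀ hq0' hq1.le
  have key : ∀ i : ℕ, Real.exp (-(r * q ^ i / (1 - r))) ≤ 1 - r * q ^ i := fun i =>
    qbt_one_sub_ge (by positivity) (mul_le_of_le_one_right hr0 (hpow1 i)) hr1
  calc Real.exp (-(r / ((1 - r) * (1 - q))))
      ≤ Real.exp (∑ i ∈ Finset.range n, -(r * q ^ i / (1 - r))) := by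
        apply Real.exp_le_exp.2
        rw [Finset.sum_neg_distrib, neg_le_neg_iff]
        calc ∑ i ∈ Finset.range n, r * q ^ i / (1 - r)
            = (r / (1 - r)) * ∑ i ∈ Finset.range n, q ^ i := by
              rw [Finset.mul_sum]; congr 1; ext i; ring
          _ ≤ (r / (1 - r)) * (1 / (1 - q)) := by
              apply mul_le_mul_of_nonneg_left (qbt_geom_sum_le hq0 hq1 n)
              apply div_nonneg hr0 (by linarith)
          _ = r / ((1 - r) * (1 - q)) := by
              rw [div_mul_div_comm, mul_one]
    _ = ∏ i ∈ Finset.range n, Real.exp (-(r * q ^ i / (1 - r))) := Real.exp_sum _ _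
    _ ≤ ∏ i ∈ Finset.range n, (1 - r * q ^ i) := by
        apply Finset.prod_le_prod (fun i _ => (Real.exp_pos _).le) (fun i _ => key i)

lemma qbt_factor_norm_lt {q : ℝ} (hq0 : 0 < q) (hq1 : q < 1) {w : ℂ} (hw : ‖w‖ < 1)
    (i : ℕ) : ‖w * (q:ℂ) ^ i‖ < 1 := by
  rw [norm_mul, norm_pow, Complex.norm_real, Real.norm_of_nonneg hq0.le]
  calc ‖w‖ * q ^ i ≤ ‖w‖ * 1 := by
        apply mul_le_mul_of_nonneg_left (pow_le_one₀ hq0.le hq1.le) (norm_nonneg w)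
    _ < 1 := by rwa [mul_one]

lemma qbt_factor_ne_zero {q : ℝ} (hq0 : 0 < q) (hq1 : q < 1) {w : ℂ} (hw : ‖w‖ < 1)
    (i : ℕ) : 1 - w * (q:ℂ) ^ i ≠ 0 := by
  intro h
  have h2 : w * (q:ℂ) ^ i = 1 := by linear_combination -h
  have := qbt_factor_norm_lt hq0 hq1 hw i
  rw [h2, norm_one] at this
  exact lt_irrefl _ this

lemma qbt_summable_log {q : ℝ} (hq0 : 0 < q) (hq1 : q < 1) {w : ℂ} (hw : ‖w‖ < 1) :
    Summable (fun i : ℕ => Complex.log (1 - w * (q:ℂ) ^ i)) := by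
  apply Summable.of_norm_bounded
    (g := fun i : ℕ => ((‖w‖ * (1 - ‖w‖)⁻¹ / 2 + 1) * ‖w‖) * q ^ i)
  · exact (summable_geometric_of_lt_one hq0.le hq1).mul_left _
  · intro i
    have hzi : ‖-(w * (q:ℂ) ^ i)‖ < 1 := by rw [norm_neg]; exact qbt_factor_norm_lt hq0 hq1 hw i
    have hlog := Complex.norm_log_one_add_le hzi
    rw [show (1 : ℂ) + -(w * (q:ℂ)^i) = 1 - w * (q:ℂ)^i by ring, norm_neg] at hlog
    apply hlog.trans
    have hqi : ‖w * (q:ℂ) ^ i‖ = ‖w‖ * q ^ i := by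
      rw [norm_mul, norm_pow, Complex.norm_real, Real.norm_of_nonneg hq0.le]
    rw [hqi]
    have h1 : ‖w‖ * q ^ i ≤ ‖w‖ := mul_le_of_le_one_right (norm_nonneg w) (pow_le_one₀ hq0.le hq1.le)
    have hwq : 0 ≤ ‖w‖ * q ^ i := by positivity
    have h2 : (1 - ‖w‖ * q ^ i)⁻¹ ≤ (1 - ‖w‖)⁻¹ := by
      apply inv_anti₀ (by linarith) (by linarith)
    have h2' : (0:ℝ) ≤ (1 - ‖w‖ * q ^ i)⁻¹ := by
      apply inv_nonneg.2; linarith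
    have key : (‖w‖ * q ^ i) ^ 2 * (1 - ‖w‖ * q ^ i)⁻¹ ≤ (‖w‖ * q ^ i) * (‖w‖ * (1 - ‖w‖)⁻¹) := by
      rw [pow_two, mul_assoc]
      apply mul_le_mul_of_nonneg_left _ hwq
      exact mul_le_mul h1 h2 h2' (norm_nonneg w)
    nlinarith [key]

lemma qbt_multipliable {q : ℝ} (hq0 : 0 < q) (hq1 : q < 1) {w : ℂ} (hw : ‖w‖ < 1) :
    Multipliable (fun i : ℕ => 1 - w * (q:ℂ) ^ i) := by
  have hs := (qbt_summable_log hq0 hq1 hw).hasSum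
  have hp := hs.cexp
  have hfun : (Complex.exp ∘ fun i : ℕ => Complex.log (1 - w * (q:ℂ) ^ i))
      = fun i : ℕ => 1 - w * (q:ℂ) ^ i := by
    funext i; exact Complex.exp_log (qbt_factor_ne_zero hq0 hq1 hw i)
  exact ⟨_, hfun ▸ hp⟩

lemma qbt_norm_prod_lower {q : ℝ} (hq0 : 0 < q) (hq1 : q < 1) {w : ℂ} (hw : ‖w‖ < 1)
    (n : ℕ) :
    Real.exp (-(‖w‖ / ((1 - ‖w‖) * (1 - q)))) ≤ ‖∏ i ∈ Finset.range n, (1 - w * (q:ℂ) ^ i)‖ := by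
  rw [norm_prod]
  calc Real.exp (-(‖w‖ / ((1 - ‖w‖) * (1 - q))))
      ≤ ∏ i ∈ Finset.range n, (1 - ‖w‖ * q ^ i) :=
        qbt_prod_lower (norm_nonneg w) hw hq0 hq1 n
    _ ≤ ∏ i ∈ Finset.range n, ‖1 - w * (q:ℂ) ^ i‖ := by
        apply Finset.prod_le_prod
        · intro i _
          have := qbt_factor_norm_lt hq0 hq1 hw i
          rw [norm_mul, norm_pow, Complex.norm_real, Real.norm_of_nonneg hq0.le] at this
          linarith
        · intro i _
          calc 1 - ‖w‖ * q ^ i = ‖(1:ℂ)‖ - ‖w * (q:ℂ) ^ i‖ := by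
                rw [norm_one, norm_mul, norm_pow, Complex.norm_real, Real.norm_of_nonneg hq0.le]
          _ ≤ ‖1 - w * (q:ℂ) ^ i‖ := norm_sub_norm_le _ _

lemma qbt_tprod_ne_zero {q : ℝ} (hq0 : 0 < q) (hq1 : q < 1) {w : ℂ} (hw : ‖w‖ < 1) :
    (∏' i : ℕ, (1 - w * (q:ℂ) ^ i)) ≠ 0 := by
  have hm := qbt_multipliable hq0 hq1 hw
  have ht := hm.hasProd.tendsto_prod_nat
  have hnorm : Filter.Tendsto (fun n => ‖∏ i ∈ Finset.range n, (1 - w * (q:ℂ) ^ i)‖)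
      Filter.atTop (nhds ‖∏' i : ℕ, (1 - w * (q:ℂ) ^ i)‖) := ht.norm
  have hge : Real.exp (-(‖w‖ / ((1 - ‖w‖) * (1 - q)))) ≤ ‖∏' i : ℕ, (1 - w * (q:ℂ) ^ i)‖ :=
    ge_of_tendsto' hnorm (qbt_norm_prod_lower hq0 hq1 hw)
  intro h
  rw [h, norm_zero] at hge
  exact absurd hge (not_le.mpr (Real.exp_pos _))

/-- The coefficients `(a;q)_k / (q;q)_k`. -/
noncomputable def qbtC (q : ℝ) (a : ℂ) (k : ℕ) : ℂ :=
  (∏ i ∈ Finset.range k, (1 - a * (q:ℂ) ^ i)) /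
    (∏ i ∈ Finset.range k, (1 - (q:ℂ) * (q:ℂ) ^ i))

lemma qbt_normq {q : ℝ} (hq0 : 0 < q) (hq1 : q < 1) : ‖(q:ℂ)‖ < 1 := by
  rw [Complex.norm_real, Real.norm_of_nonneg hq0.le]; exact hq1

lemma qbt_denom_ne_zero {q : ℝ} (hq0 : 0 < q) (hq1 : q < 1) (k : ℕ) :
    (∏ i ∈ Finset.range k, (1 - (q:ℂ) * (q:ℂ) ^ i)) ≠ 0 :=
  Finset.prod_ne_zero_iff.mpr fun i _ => qbt_factor_ne_zero hq0 hq1 (qbt_normq hq0 hq1) i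

lemma qbtC_zero (q : ℝ) (a : ℂ) : qbtC q a 0 = 1 := by simp [qbtC]

lemma qbtC_rec {q : ℝ} (hq0 : 0 < q) (hq1 : q < 1) (a : ℂ) (k : ℕ) :
    qbtC q a (k + 1) * (1 - (q:ℂ) * (q:ℂ) ^ k) = qbtC q a k * (1 - a * (q:ℂ) ^ k) := by
  unfold qbtC
  rw [Finset.prod_range_succ, Finset.prod_range_succ]
  have h1 := qbt_denom_ne_zero hq0 hq1 k
  have h2 : (1 - (q:ℂ) * (q:ℂ) ^ k) ≠ 0 := qbt_factor_ne_zero hq0 hq1 (qbt_normq hq0 hq1) k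
  rw [div_mul_eq_mul_div, div_mul_eq_mul_div, div_eq_div_iff (mul_ne_zero h1 h2) h1]
  ring

lemma qbtC_bound {q : ℝ} (hq0 : 0 < q) (hq1 : q < 1) (a : ℂ) (k : ℕ) :
    ‖qbtC q a k‖ ≤ Real.exp (‖a‖ / (1 - q)) * Real.exp (q / ((1 - q) * (1 - q))) := by
  unfold qbtC
  rw [norm_div]
  have hnum : ‖∏ i ∈ Finset.range k, (1 - a * (q:ℂ) ^ i)‖ ≤ Real.exp (‖a‖ / (1 - q)) := by
    rw [norm_prod]
    calc ∏ i ∈ Finset.range k, ‖1 - a * (q:ℂ) ^ i‖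
        ≤ ∏ i ∈ Finset.range k, Real.exp (‖a‖ * q ^ i) := by
          apply Finset.prod_le_prod (fun i _ => norm_nonneg _)
          intro i _
          calc ‖1 - a * (q:ℂ) ^ i‖ ≤ ‖(1:ℂ)‖ + ‖a * (q:ℂ) ^ i‖ := norm_sub_le _ _
            _ = 1 + ‖a‖ * q ^ i := by
                rw [norm_one, norm_mul, norm_pow, Complex.norm_real,
                  Real.norm_of_nonneg hq0.le]
            _ ≤ Real.exp (‖a‖ * q ^ i) := by
                have := Real.add_one_le_exp (‖a‖ * q ^ i); linarith
      _ = Real.exp (∑ i ∈ Finset.range k, ‖a‖ * q ^ i) := (Real.exp_sum _ _).symm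
      _ ≤ Real.exp (‖a‖ / (1 - q)) := by
          apply Real.exp_le_exp.2
          rw [← Finset.mul_sum]
          calc ‖a‖ * ∑ i ∈ Finset.range k, q ^ i ≤ ‖a‖ * (1 / (1 - q)) :=
              mul_le_mul_of_nonneg_left (qbt_geom_sum_le hq0 hq1 k) (norm_nonneg a)
            _ = ‖a‖ / (1 - q) := by ring
  have hden : Real.exp (-(q / ((1 - q) * (1 - q))))
      ≤ ‖∏ i ∈ Finset.range k, (1 - (q:ℂ) * (q:ℂ) ^ i)‖ := by
    have := qbt_norm_prod_lower hq0 hq1 (qbt_normq hq0 hq1) k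
    rwa [Complex.norm_real, Real.norm_of_nonneg hq0.le] at this
  calc ‖∏ i ∈ Finset.range k, (1 - a * (q:ℂ) ^ i)‖ /
        ‖∏ i ∈ Finset.range k, (1 - (q:ℂ) * (q:ℂ) ^ i)‖
      ≤ Real.exp (‖a‖ / (1 - q)) / Real.exp (-(q / ((1 - q) * (1 - q)))) :=
        div_le_div₀ (Real.exp_pos _).le hnum (Real.exp_pos _) hden
    _ = Real.exp (‖a‖ / (1 - q)) * Real.exp (q / ((1 - q) * (1 - q))) := by
        rw [Real.exp_neg, div_inv_eq_mul]

lemma qbt_summable {q : ℝ} (hq0 : 0 < q) (hq1 : q < 1) (a : ℂ) {w : ℂ} (hw : ‖w‖ < 1) :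
    Summable (fun k : ℕ => qbtC q a k * w ^ k) := by
  apply Summable.of_norm_bounded
    (g := fun k : ℕ => (Real.exp (‖a‖ / (1 - q)) * Real.exp (q / ((1 - q) * (1 - q)))) * ‖w‖ ^ k)
  · exact (summable_geometric_of_lt_one (norm_nonneg w) hw).mul_left _
  · intro k
    rw [norm_mul, norm_pow]
    exact mul_le_mul_of_nonneg_right (qbtC_bound hq0 hq1 a k) (by positivity)

lemma qbt_funeq {q : ℝ} (hq0 : 0 < q) (hq1 : q < 1) (a : ℂ) {w : ℂ} (hw : ‖w‖ < 1) :
    (1 - w) * (∑' k : ℕ, qbtC q a k * w ^ k)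
      = (1 - a * w) * (∑' k : ℕ, qbtC q a k * ((q:ℂ) * w) ^ k) := by
  have hqw : ‖(q:ℂ) * w‖ < 1 := by
    rw [norm_mul, Complex.norm_real, Real.norm_of_nonneg hq0.le]
    calc q * ‖w‖ ≤ 1 * ‖w‖ := mul_le_mul_of_nonneg_right hq1.le (norm_nonneg w)
      _ < 1 := by rwa [one_mul]
  have h1 : Summable (fun k : ℕ => qbtC q a k * w ^ k) := qbt_summable hq0 hq1 a hw
  have h2 : Summable (fun k : ℕ => qbtC q a k * ((q:ℂ) * w) ^ k) := qbt_summable hq0 hq1 a hqw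
  set S : ℂ := ∑' k : ℕ, qbtC q a k * w ^ k with hS
  set T : ℂ := ∑' k : ℕ, qbtC q a k * ((q:ℂ) * w) ^ k with hT
  -- key : S - T = w * S - (a*w) * T
  have hsub1 : ∑' k : ℕ, (qbtC q a k * w ^ k - qbtC q a k * ((q:ℂ) * w) ^ k) = S - T :=
    Summable.tsum_sub h1 h2
  have hsub2 : ∑' k : ℕ, (w * (qbtC q a k * w ^ k) - (a * w) * (qbtC q a k * ((q:ℂ) * w) ^ k))
      = w * S - (a * w) * T := by
    rw [Summable.tsum_sub (h1.mul_left w) (h2.mul_left (a * w)), tsum_mul_left, tsum_mul_left]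
  have hshift : ∑' k : ℕ, (qbtC q a k * w ^ k - qbtC q a k * ((q:ℂ) * w) ^ k)
      = ∑' k : ℕ, (w * (qbtC q a k * w ^ k) - (a * w) * (qbtC q a k * ((q:ℂ) * w) ^ k)) := by
    rw [Summable.tsum_eq_zero_add (h1.sub h2)]
    have h0 : qbtC q a 0 * w ^ 0 - qbtC q a 0 * ((q:ℂ) * w) ^ 0 = 0 := by simp
    rw [h0, zero_add]
    apply tsum_congr
    intro k
    have hrec := qbtC_rec hq0 hq1 a k
    have hp : (q:ℂ) * (q:ℂ) ^ k = (q:ℂ) ^ (k + 1) := (pow_succ' _ _).symm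
    rw [hp] at hrec
    linear_combination (w : ℂ) ^ (k + 1) * hrec
  have key : S - T = w * S - (a * w) * T := by rw [← hsub1, ← hsub2, hshift]
  linear_combination key

/-- Multipliability for arbitrary `w`. -/
lemma qbt_multipliable' {q : ℝ} (hq0 : 0 < q) (hq1 : q < 1) (w : ℂ) :
    Multipliable (fun i : ℕ => 1 - w * (q:ℂ) ^ i) := by
  obtain ⟨N, hN⟩ : ∃ N : ℕ, ‖w‖ * q ^ N < 1 := by
    obtain ⟨N, hN⟩ := exists_pow_lt_of_lt_one (show (0:ℝ) < 1 / (‖w‖ + 1) by positivity) hq1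
    refine ⟨N, ?_⟩
    have hw1 : (0:ℝ) < ‖w‖ + 1 := by positivity
    calc ‖w‖ * q ^ N ≤ (‖w‖ + 1) * q ^ N := by
          apply mul_le_mul_of_nonneg_right (by linarith) (by positivity)
      _ < (‖w‖ + 1) * (1 / (‖w‖ + 1)) := by
          apply mul_lt_mul_of_pos_left hN hw1
      _ = 1 := by field_simp
  have hnorm : ‖w * (q:ℂ) ^ N‖ < 1 := by
    rwa [norm_mul, norm_pow, Complex.norm_real, Real.norm_of_nonneg hq0.le]
  have htail : Multipliable (fun i : ℕ => 1 - (w * (q:ℂ) ^ N) * (q:ℂ) ^ i) :=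
    qbt_multipliable hq0 hq1 hnorm
  have heq : (fun i : ℕ => 1 - (w * (q:ℂ) ^ N) * (q:ℂ) ^ i)
      = fun i : ℕ => 1 - w * (q:ℂ) ^ (i + N) := by
    funext i; rw [pow_add]; ring
  rw [heq] at htail
  obtain ⟨t, ht⟩ := htail
  exact ⟨_, HasProd.prod_range_mul (f := fun i : ℕ => 1 - w * (q:ℂ) ^ i) (k := N) ht⟩

lemma qbt_iterate {q : ℝ} (hq0 : 0 < q) (hq1 : q < 1) (a : ℂ) {z : ℂ} (hz : ‖z‖ < 1)
    (n : ℕ) :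
    (∑' k : ℕ, qbtC q a k * z ^ k) * ∏ i ∈ Finset.range n, (1 - z * (q:ℂ) ^ i)
      = (∑' k : ℕ, qbtC q a k * ((q:ℂ) ^ n * z) ^ k) *
          ∏ i ∈ Finset.range n, (1 - a * z * (q:ℂ) ^ i) := by
  induction n with
  | zero => simp
  | succ n ih =>
    have hwn : ‖(q:ℂ) ^ n * z‖ < 1 := by
      rw [norm_mul, norm_pow, Complex.norm_real, Real.norm_of_nonneg hq0.le]
      calc q ^ n * ‖z‖ ≤ 1 * ‖z‖ :=
          mul_le_mul_of_nonneg_right (pow_le_one₀ hq0.le hq1.le) (norm_nonneg z)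
        _ < 1 := by rwa [one_mul]
    have hfe := qbt_funeq hq0 hq1 a hwn
    rw [show (q:ℂ) * ((q:ℂ) ^ n * z) = (q:ℂ) ^ (n + 1) * z by ring] at hfe
    rw [Finset.prod_range_succ, Finset.prod_range_succ]
    calc (∑' k : ℕ, qbtC q a k * z ^ k) *
          ((∏ i ∈ Finset.range n, (1 - z * (q:ℂ) ^ i)) * (1 - z * (q:ℂ) ^ n))
        = ((∑' k : ℕ, qbtC q a k * z ^ k) * ∏ i ∈ Finset.range n, (1 - z * (q:ℂ) ^ i)) *
            (1 - z * (q:ℂ) ^ n) := by ring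
      _ = ((∑' k : ℕ, qbtC q a k * ((q:ℂ) ^ n * z) ^ k) *
            ∏ i ∈ Finset.range n, (1 - a * z * (q:ℂ) ^ i)) * (1 - z * (q:ℂ) ^ n) := by
          rw [ih]
      _ = ((1 - (q:ℂ) ^ n * z) * (∑' k : ℕ, qbtC q a k * ((q:ℂ) ^ n * z) ^ k)) *
            ∏ i ∈ Finset.range n, (1 - a * z * (q:ℂ) ^ i) := by ring
      _ = ((1 - a * ((q:ℂ) ^ n * z)) * (∑' k : ℕ, qbtC q a k * ((q:ℂ) ^ (n + 1) * z) ^ k)) *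
            ∏ i ∈ Finset.range n, (1 - a * z * (q:ℂ) ^ i) := by rw [hfe]
      _ = (∑' k : ℕ, qbtC q a k * ((q:ℂ) ^ (n + 1) * z) ^ k) *
            ((∏ i ∈ Finset.range n, (1 - a * z * (q:ℂ) ^ i)) * (1 - a * z * (q:ℂ) ^ n)) := by
          ring

lemma qbt_F_sub_one {q : ℝ} (hq0 : 0 < q) (hq1 : q < 1) (a : ℂ) {w : ℂ} (hw : ‖w‖ < 1) :
    ‖(∑' k : ℕ, qbtC q a k * w ^ k) - 1‖
      ≤ (Real.exp (‖a‖ / (1 - q)) * Real.exp (q / ((1 - q) * (1 - q)))) * ‖w‖ *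
          (1 - ‖w‖)⁻¹ := by
  have hsum := qbt_summable hq0 hq1 a hw
  have htail : Summable (fun k : ℕ => qbtC q a (k + 1) * w ^ (k + 1)) :=
    (summable_nat_add_iff (f := fun k : ℕ => qbtC q a k * w ^ k) 1).2 hsum
  have hzero : qbtC q a 0 * w ^ 0 = 1 := by simp [qbtC_zero]
  rw [Summable.tsum_eq_zero_add hsum, hzero, add_sub_cancel_left]
  set C : ℝ := Real.exp (‖a‖ / (1 - q)) * Real.exp (q / ((1 - q) * (1 - q))) with hC
  have hC0 : 0 ≤ C := by positivity
  have hbound : ∀ k : ℕ, ‖qbtC q a (k + 1) * w ^ (k + 1)‖ ≤ (C * ‖w‖) * ‖w‖ ^ k := by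
    intro k
    rw [norm_mul, norm_pow, pow_succ']
    calc ‖qbtC q a (k + 1)‖ * (‖w‖ * ‖w‖ ^ k) ≤ C * (‖w‖ * ‖w‖ ^ k) :=
        mul_le_mul_of_nonneg_right (qbtC_bound hq0 hq1 a (k + 1)) (by positivity)
      _ = (C * ‖w‖) * ‖w‖ ^ k := by ring
  have hsnorm : Summable (fun k : ℕ => ‖qbtC q a (k + 1) * w ^ (k + 1)‖) :=
    Summable.of_nonneg_of_le (fun k => norm_nonneg _) hbound
      ((summable_geometric_of_lt_one (norm_nonneg w) hw).mul_left _)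
  calc ‖∑' k : ℕ, qbtC q a (k + 1) * w ^ (k + 1)‖
      ≤ ∑' k : ℕ, ‖qbtC q a (k + 1) * w ^ (k + 1)‖ := norm_tsum_le_tsum_norm hsnorm
    _ ≤ ∑' k : ℕ, (C * ‖w‖) * ‖w‖ ^ k := by
        apply Summable.tsum_le_tsum hbound hsnorm
          ((summable_geometric_of_lt_one (norm_nonneg w) hw).mul_left _)
    _ = (C * ‖w‖) * (1 - ‖w‖)⁻¹ := by
        rw [tsum_mul_left, tsum_geometric_of_lt_one (norm_nonneg w) hw]
    _ = C * ‖w‖ * (1 - ‖w‖)⁻¹ := by ring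

lemma qbt_tendsto_one {q : ℝ} (hq0 : 0 < q) (hq1 : q < 1) (a : ℂ) {z : ℂ} (hz : ‖z‖ < 1) :
    Filter.Tendsto (fun n : ℕ => ∑' k : ℕ, qbtC q a k * ((q:ℂ) ^ n * z) ^ k)
      Filter.atTop (nhds 1) := by
  set C : ℝ := Real.exp (‖a‖ / (1 - q)) * Real.exp (q / ((1 - q) * (1 - q))) with hC
  rw [tendsto_iff_norm_sub_tendsto_zero]
  apply squeeze_zero (fun n => norm_nonneg _)
    (g := fun n : ℕ => (C * ‖z‖ * (1 - ‖z‖)⁻¹) * q ^ n)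
  · intro n
    have hnq : ‖(q:ℂ) ^ n * z‖ = q ^ n * ‖z‖ := by
      rw [norm_mul, norm_pow, Complex.norm_real, Real.norm_of_nonneg hq0.le]
    have hqn1 : q ^ n ≤ 1 := pow_le_one₀ hq0.le hq1.le
    have hle : ‖(q:ℂ) ^ n * z‖ ≤ ‖z‖ := by
      rw [hnq]
      calc q ^ n * ‖z‖ ≤ 1 * ‖z‖ := mul_le_mul_of_nonneg_right hqn1 (norm_nonneg z)
        _ = ‖z‖ := one_mul _
    have hwn : ‖(q:ℂ) ^ n * z‖ < 1 := lt_of_le_of_lt hle hz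
    have h1 := qbt_F_sub_one hq0 hq1 a hwn
    apply h1.trans
    rw [hnq]
    have hinv : (1 - q ^ n * ‖z‖)⁻¹ ≤ (1 - ‖z‖)⁻¹ := by
      apply inv_anti₀ (by linarith)
      rw [hnq] at hle; linarith
    have hC0 : 0 ≤ C := by positivity
    calc C * (q ^ n * ‖z‖) * (1 - q ^ n * ‖z‖)⁻¹
        ≤ C * (q ^ n * ‖z‖) * (1 - ‖z‖)⁻¹ := by
          apply mul_le_mul_of_nonneg_left hinv (by positivity)
      _ = (C * ‖z‖ * (1 - ‖z‖)⁻¹) * q ^ n := by ring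
  · rw [show (0:ℝ) = (C * ‖z‖ * (1 - ‖z‖)⁻¹) * 0 by ring]
    exact (tendsto_pow_atTop_nhds_zero_of_lt_one hq0.le hq1).const_mul _

/-- q-binomial theorem: `(az;q)_∞ / (z;q)_∞ = ∑_{k≥0} (a;q)_k z^k / (q;q)_k` for `|z| < 1`. -/
theorem q_binomial_theorem (q : ℝ) (hq : 0 < q) (hq1 : q < 1) (a z : ℂ)
    (hz : ‖z‖ < 1) :
    (∏' i : ℕ, (1 - a * z * (q : ℂ) ^ i)) / (∏' i : ℕ, (1 - z * (q : ℂ) ^ i))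
      = ∑' k : ℕ, (∏ i ∈ Finset.range k, (1 - a * (q : ℂ) ^ i)) * z ^ k /
          ∏ i ∈ Finset.range k, (1 - (q : ℂ) * (q : ℂ) ^ i) := by
  have hz' : ‖z‖ < 1 := hz
  have hP : Multipliable (fun i : ℕ => 1 - z * (q:ℂ) ^ i) := qbt_multipliable hq hq1 hz'
  have hQ : Multipliable (fun i : ℕ => 1 - a * z * (q:ℂ) ^ i) := qbt_multipliable' hq hq1 (a * z)
  have hPne : (∏' i : ℕ, (1 - z * (q:ℂ) ^ i)) ≠ 0 := qbt_tprod_ne_zero hq hq1 hz'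
  have hL1 : Filter.Tendsto
      (fun n : ℕ => (∑' k : ℕ, qbtC q a k * z ^ k) * ∏ i ∈ Finset.range n, (1 - z * (q:ℂ) ^ i))
      Filter.atTop (nhds ((∑' k : ℕ, qbtC q a k * z ^ k) * ∏' i : ℕ, (1 - z * (q:ℂ) ^ i))) :=
    (hP.hasProd.tendsto_prod_nat).const_mul _
  have hL2 : Filter.Tendsto
      (fun n : ℕ => (∑' k : ℕ, qbtC q a k * ((q:ℂ) ^ n * z) ^ k) *
        ∏ i ∈ Finset.range n, (1 - a * z * (q:ℂ) ^ i))
      Filter.atTop (nhds (1 * ∏' i : ℕ, (1 - a * z * (q:ℂ) ^ i))) :=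
    (qbt_tendsto_one hq hq1 a hz').mul (hQ.hasProd.tendsto_prod_nat)
  have hL1' := hL1.congr (fun n => qbt_iterate hq hq1 a hz' n)
  have hkey : (∑' k : ℕ, qbtC q a k * z ^ k) * (∏' i : ℕ, (1 - z * (q:ℂ) ^ i))
      = 1 * ∏' i : ℕ, (1 - a * z * (q:ℂ) ^ i) := tendsto_nhds_unique hL1' hL2
  rw [one_mul] at hkey
  have hrhs : (∑' k : ℕ, (∏ i ∈ Finset.range k, (1 - a * (q:ℂ) ^ i)) * z ^ k /
      ∏ i ∈ Finset.range k, (1 - (q:ℂ) * (q:ℂ) ^ i)) = ∑' k : ℕ, qbtC q a k * z ^ k := by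
    apply tsum_congr
    intro k
    rw [qbtC, div_mul_eq_mul_div]
  rw [hrhs, ← hkey, mul_div_assoc, div_self hPne, mul_one]
end
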